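/- arXiv:1509.03302 — 2 statements merged into one kernel-verified Lean document; each statement's English description precedes it below -/
import Mathlib

section
/- Let m be a symmetric relation on a type α of base records, and model composite records as nonempty finite subsets of α with merge given by set union. Let ≈ be any symmetric relation on nonempty finite subsets of α such that (i) on singletons ≈ agrees with m, i.e., {r₁} ≈ {r₂} whenever m(r₁, r₂), and (ii) ≈ satisfies representativity: for all composites o₁, o₂, o₄, if o₁ ≈ o₄ then (o₁ ∪ o₂) ≈ o₄. Then ≈ contains the wrapper relation: for all nonempty finite o₁, o₂ ⊆ α, if there exist r ∈ o₁ and r' ∈ o₂ with m(r, r'), then o₁ ≈ o₂. (Direction 1 of the paper's Theorem 3: the proposed 'wrapper' match function makes the minimum set of matches required by the ICAR properties.) -/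
/-- Direction 1 of the paper's Theorem 3: any symmetric match relation `≈` on composite
records (nonempty finite subsets of base records, merged by union) that agrees with the
base match function `m` on singletons and satisfies representativity must contain the
wrapper relation: whenever some constituent of `o₁` matches some constituent of `o₂`,
then `o₁ ≈ o₂`. -/
theorem wrapper_is_minimal {α : Type*} [DecidableEq α]
    (m : α → α → Prop) (hm : ∀ a b, m a b → m b a)
    (Match : Finset α → Finset α → Prop)
    (hsymm : ∀ o₁ o₂, o₁.Nonempty → o₂.Nonempty → Match o₁ o₂ → Match o₂ o₁)
    (hsingle : ∀ r₁ r₂ : α, m r₁ r₂ → Match {r₁} {r₂})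
    (hrep : ∀ o₁ o₂ o₄ : Finset α, o₁.Nonempty → o₂.Nonempty → o₄.Nonempty →
      Match o₁ o₄ → Match (o₁ ∪ o₂) o₄) :
    ∀ o₁ o₂ : Finset α, o₁.Nonempty → o₂.Nonempty →
      (∃ r ∈ o₁, ∃ r' ∈ o₂, m r r') → Match o₁ o₂ := by
  intro o₁ o₂ h₁ h₂ ⟨r, hr, r', hr', hmr⟩
  have e₁ : ({r} : Finset α) ∪ o₁ = o₁ := by
    ext x; simp; rintro rfl; exact hr
  have e₂ : ({r'} : Finset α) ∪ o₂ = o₂ := by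
    ext x; simp; rintro rfl; exact hr'
  have s : ({r} : Finset α).Nonempty := Finset.singleton_nonempty r
  have s' : ({r'} : Finset α).Nonempty := Finset.singleton_nonempty r'
  have h1 : Match o₁ {r'} := by
    have := hrep {r} o₁ {r'} s h₁ s' (hsingle r r' hmr)
    rwa [e₁] at this
  have h2 : Match {r'} o₁ := hsymm _ _ h₁ s' h1
  have h3 : Match o₂ o₁ := by
    have := hrep {r'} o₂ o₁ s' h₂ h₁ h2
    rwa [e₂] at this
  exact hsymm _ _ h₂ h₁ h3
end

section
/- Let m be a reflexive and symmetric relation on a type α of base records, and model composite records as nonempty finite subsets of α with merge given by set union. Then the wrapper relation M, defined by M(o₁, o₂) ↔ ∃ r ∈ o₁, ∃ r' ∈ o₂, m(r, r'), satisfies: (idempotence) M(o, o) for every nonempty finite o ⊆ α; (commutativity) M(o₁, o₂) implies M(o₂, o₁); and (representativity) if M(o₁, o₄) then M(o₁ ∪ o₂, o₄) for every nonempty finite o₂ ⊆ α. (Part of the paper's Theorem 3: the union merge with the wrapper match function satisfies the ICAR properties for any match function.) -/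
/-- Part of the paper's Theorem 3: for any reflexive and symmetric base match function
`m`, the wrapper match relation `M(o₁,o₂) ↔ ∃ r ∈ o₁, ∃ r' ∈ o₂, m r r'` on composite
records (nonempty finite subsets, merged by union) satisfies idempotence, commutativity,
and representativity. -/
theorem wrapper_satisfies_ICAR {α : Type*} [DecidableEq α]
    (m : α → α → Prop) (hrefl : ∀ a, m a a) (hsymm : ∀ a b, m a b → m b a)
    (M : Finset α → Finset α → Prop)
    (hM : ∀ o₁ o₂ : Finset α, M o₁ o₂ ↔ ∃ r ∈ o₁, ∃ r' ∈ o₂, m r r') :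
    (∀ o : Finset α, o.Nonempty → M o o) ∧
    (∀ o₁ o₂ : Finset α, o₁.Nonempty → o₂.Nonempty → M o₁ o₂ → M o₂ o₁) ∧
    (∀ o₁ o₂ o₄ : Finset α, o₁.Nonempty → o₂.Nonempty → o₄.Nonempty →
      M o₁ o₄ → M (o₁ ∪ o₂) o₄) := by
  refine ⟨?_, ?_, ?_⟩
  · rintro o ⟨a, ha⟩
    exact (hM o o).mpr ⟨a, ha, a, ha, hrefl a⟩
  · rintro o₁ o₂ _ _ h
    obtain ⟨r, hr, r', hr', hm⟩ := (hM o₁ o₂).mp h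
    exact (hM o₂ o₁).mpr ⟨r', hr', r, hr, hsymm _ _ hm⟩
  · rintro o₁ o₂ o₄ _ _ _ h
    obtain ⟨r, hr, r', hr', hm⟩ := (hM o₁ o₄).mp h
    exact (hM _ o₄).mpr ⟨r, Finset.mem_union_left _ hr, r', hr', hm⟩
end
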